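/- Let d ≥ 3 and let φ : ℝ^d × ℝ → [0,∞) be continuous such that for every x, t ↦ φ(x,t) is strictly increasing and concave on [0,∞) and φ(x,t) = 0 for all t ≤ 0. If there exists a nontrivial bounded nonnegative entire solution of Δu(x) = φ(x, u(x)) on ℝ^d, then there is no large entire solution, i.e. no nonnegative C² function u on ℝ^d with Δu(x) = φ(x, u(x)) for all x and u(x) → ∞ as ‖x‖ → ∞. -/

import Mathlib

/-!
For `0 < ε ≤ 1` the function `u - ε w` tends to `-∞` at infinity, so it attains a global maximum
at some `x₀`, where `Δ (u - ε w) ≤ 0`. There `φ(u) ≤ ε φ(w) ≤ φ(ε w)` by concavity and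
`φ(0) ≥ 0`, and strict monotonicity gives `u(x₀) ≤ ε w(x₀)`; hence `u ≤ ε w` everywhere.
Letting `ε → 0` forces `u = 0`.
-/

open MeasureTheory Filter Set

/-- The Euclidean Laplacian of `u` at `x`: the sum of the pure second derivatives
in the coordinate directions. -/
noncomputable def laplacian {d : ℕ} (u : EuclideanSpace ℝ (Fin d) → ℝ)
    (x : EuclideanSpace ℝ (Fin d)) : ℝ :=
  ∑ i : Fin d, iteratedFDeriv ℝ 2 u x
    ![EuclideanSpace.single i (1 : ℝ), EuclideanSpace.single i (1 : ℝ)]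

open Topology
open scoped Laplacian

theorem laplacian_eq_innerProductSpace_laplacian {d : ℕ} (u : EuclideanSpace ℝ (Fin d) → ℝ) :
    laplacian u = Δ u := by
  rw [InnerProductSpace.laplacian_eq_iteratedFDeriv_orthonormalBasis u
    (EuclideanSpace.basisFun (Fin d) ℝ)]
  funext x
  simp [laplacian]

theorem IsLocalMax.deriv_deriv_nonpos {f : ℝ → ℝ} {a : ℝ} (h : IsLocalMax f a)
    (hf : ContinuousAt f a) : deriv (deriv f) a ≤ 0 := by
  by_contra! hpos
  have hconst : f =ᶠ[𝓝 a] fun _ => f a :=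
    ((isLocalMin_of_deriv_deriv_pos hpos h.deriv_eq_zero hf).and h).mono
      fun x hx => le_antisymm hx.2 hx.1
  have hderiv : deriv f =ᶠ[𝓝 a] fun _ => 0 :=
    hconst.eventuallyEq_nhds.mono fun x hx => by rw [hx.deriv_eq, deriv_const]
  simp [hderiv.deriv_eq] at hpos

theorem ContDiff.deriv_deriv_comp_add_smul {E : Type*} [NormedAddCommGroup E]
    [NormedSpace ℝ E] {g : E → ℝ} (hg : ContDiff ℝ 2 g) (x v : E) :
    deriv (deriv fun t : ℝ => g (x + t • v)) 0 = iteratedFDeriv ℝ 2 g x ![v, v] := by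
  have hderiv : deriv (fun t : ℝ => g (x + t • v)) =
      fun t => iteratedFDeriv ℝ 1 g (x + t • v) (fun _ => v) := by
    funext t
    simpa using ((hg.contDiffAt (x := x + t • v)).of_le (by norm_num)).deriv_fderiv_add_smul
      (n := 0)
  rw [hderiv, (hg.contDiffAt (x := x + (0 : ℝ) • v)).deriv_fderiv_add_smul (n := 1)]
  simp [iteratedFDeriv_two_apply]

theorem IsLocalMax.laplacian_nonpos {E : Type*} [NormedAddCommGroup E] [InnerProductSpace ℝ E]
    [FiniteDimensional ℝ E] {g : E → ℝ} {x : E} (h : IsLocalMax g x) (hg : ContDiff ℝ 2 g) :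
    Δ g x ≤ 0 := by
  rw [InnerProductSpace.laplacian_eq_iteratedFDeriv_stdOrthonormalBasis]
  refine Finset.sum_nonpos fun i _ => ?_
  rw [← hg.deriv_deriv_comp_add_smul]
  set line : ℝ → E := fun t => x + t • stdOrthonormalBasis ℝ E i
  have hline : Continuous line := by fun_prop
  have hmax : IsLocalMax g (line 0) := by simpa [line] using h
  exact (hmax.comp_continuous hline.continuousAt).deriv_deriv_nonpos
    (hg.continuous.comp hline).continuousAt

theorem ConcaveOn.mul_le_map_mul {f : ℝ → ℝ} (hf : ConcaveOn ℝ (Ici 0) f) (h0 : 0 ≤ f 0)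
    {ε t : ℝ} (hε0 : 0 ≤ ε) (hε1 : ε ≤ 1) (ht : 0 ≤ t) : ε * f t ≤ f (ε * t) := by
  have h := hf.2 (mem_Ici.2 ht) (mem_Ici.2 le_rfl) hε0 (sub_nonneg.2 hε1) (add_sub_cancel ε 1)
  simp only [smul_eq_mul, mul_zero, add_zero] at h
  nlinarith

theorem le_mul_large_solution_of_laplacian_eq {E : Type*} [NormedAddCommGroup E]
    [InnerProductSpace ℝ E] [FiniteDimensional ℝ E] {φ : E → ℝ → ℝ}
    (hφ_mono : ∀ x, StrictMonoOn (φ x) (Ici 0)) (hφ_conc : ∀ x, ConcaveOn ℝ (Ici 0) (φ x))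
    (hφ_zero_nonneg : ∀ x, 0 ≤ φ x 0) {u w : E → ℝ}
    (hu : ContDiff ℝ 2 u) (hu_nonneg : ∀ x, 0 ≤ u x) (hu_eq : ∀ x, Δ u x = φ x (u x))
    (hu_bdd : BddAbove (range u))
    (hw : ContDiff ℝ 2 w) (hw_nonneg : ∀ x, 0 ≤ w x) (hw_eq : ∀ x, Δ w x = φ x (w x))
    (hw_tendsto : Tendsto w (Bornology.cobounded E) atTop)
    {ε : ℝ} (hε0 : 0 < ε) (hε1 : ε ≤ 1) (x : E) : u x ≤ ε * w x := by
  obtain ⟨M, hM⟩ := hu_bdd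
  have hg : ContDiff ℝ 2 (u - ε • w) := hu.sub (hw.const_smul ε)
  have hg_tendsto : Tendsto (u - ε • w) (cocompact E) atBot := by
    rw [← Metric.cobounded_eq_cocompact]
    refine tendsto_atBot_mono (fun y => ?_)
      (tendsto_atBot_add_const_left _ M (hw_tendsto.const_mul_atTop_of_neg (neg_lt_zero.2 hε0)))
    simp only [Pi.sub_apply, Pi.smul_apply, smul_eq_mul]
    linarith [hM (mem_range_self y)]
  obtain ⟨x₀, hx₀⟩ := hg.continuous.exists_forall_ge hg_tendsto
  have hlap : Δ (u - ε • w) x₀ = φ x₀ (u x₀) - ε * φ x₀ (w x₀) := by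
    rw [hu.contDiffAt.laplacian_sub (f₂ := ε • w) (hw.const_smul ε).contDiffAt,
      InnerProductSpace.laplacian_smul ε hw.contDiffAt, hu_eq, hw_eq, smul_eq_mul]
  have hx₀_le : u x₀ ≤ ε * w x₀ := by
    by_contra! hlt
    have hmax : IsLocalMax (u - ε • w) x₀ := (isMaxOn_univ_iff.2 hx₀).isLocalMax univ_mem
    linarith [hmax.laplacian_nonpos hg,
      hφ_mono x₀ (mul_nonneg hε0.le (hw_nonneg x₀)) (hu_nonneg x₀) hlt,
      (hφ_conc x₀).mul_le_map_mul (hφ_zero_nonneg x₀) hε0.le hε1 (hw_nonneg x₀)]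
  have hx := hx₀ x
  simp only [Pi.sub_apply, Pi.smul_apply, smul_eq_mul] at hx
  linarith

theorem nonpos_of_forall_le_mul {a b : ℝ} (h : ∀ ε : ℝ, 0 < ε → ε ≤ 1 → a ≤ ε * b) : a ≤ 0 := by
  have hlim : Tendsto (fun ε : ℝ => ε * b) (𝓝[>] 0) (𝓝 0) := by
    simpa using tendsto_nhdsWithin_of_tendsto_nhds ((continuous_mul_const b).tendsto 0)
  exact ge_of_tendsto hlim <|
    mem_of_superset (Ioc_mem_nhdsGT one_pos) fun ε hε => h ε hε.1 hε.2

theorem stmt_15_general (d : ℕ)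
    (φ : EuclideanSpace ℝ (Fin d) → ℝ → ℝ)
    (hφ_nonneg : ∀ x t, 0 ≤ φ x t)
    (hφ_mono : ∀ x, StrictMonoOn (φ x) (Ici 0))
    (hφ_conc : ∀ x, ConcaveOn ℝ (Ici 0) (φ x))
    (hbounded : ∃ u : EuclideanSpace ℝ (Fin d) → ℝ,
      ContDiff ℝ 2 u ∧ (∀ x, 0 ≤ u x) ∧
      (∀ x, laplacian u x = φ x (u x)) ∧
      (∃ M, ∀ x, u x ≤ M) ∧ u ≠ 0) :
    ¬ ∃ u : EuclideanSpace ℝ (Fin d) → ℝ,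
      ContDiff ℝ 2 u ∧ (∀ x, 0 ≤ u x) ∧
      (∀ x, laplacian u x = φ x (u x)) ∧
      Tendsto u (Bornology.cobounded (EuclideanSpace ℝ (Fin d))) atTop := by
  obtain ⟨u, hu, hu_nonneg, hu_eq, ⟨M, hM⟩, hu_ne⟩ := hbounded
  rintro ⟨w, hw, hw_nonneg, hw_eq, hw_tendsto⟩
  simp only [laplacian_eq_innerProductSpace_laplacian] at hu_eq hw_eq
  refine hu_ne (funext fun x => le_antisymm ?_ (hu_nonneg x))
  exact nonpos_of_forall_le_mul fun ε hε0 hε1 =>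
    le_mul_large_solution_of_laplacian_eq hφ_mono hφ_conc (fun x => hφ_nonneg x 0) hu hu_nonneg
      hu_eq ⟨M, forall_mem_range.2 hM⟩ hw hw_nonneg hw_eq hw_tendsto hε0 hε1 x

theorem stmt_15 (d : ℕ) (hd : 3 ≤ d)
    (φ : EuclideanSpace ℝ (Fin d) → ℝ → ℝ)
    (hφ_cont : Continuous (fun q : EuclideanSpace ℝ (Fin d) × ℝ => φ q.1 q.2))
    (hφ_nonneg : ∀ x t, 0 ≤ φ x t)
    (hφ_mono : ∀ x, StrictMonoOn (φ x) (Ici 0))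
    (hφ_conc : ∀ x, ConcaveOn ℝ (Ici 0) (φ x))
    (hφ_zero : ∀ x, ∀ t ≤ (0 : ℝ), φ x t = 0)
    (hbounded : ∃ u : EuclideanSpace ℝ (Fin d) → ℝ,
      ContDiff ℝ 2 u ∧ (∀ x, 0 ≤ u x) ∧
      (∀ x, laplacian u x = φ x (u x)) ∧
      (∃ M, ∀ x, u x ≤ M) ∧ u ≠ 0) :
    ¬ ∃ u : EuclideanSpace ℝ (Fin d) → ℝ,
      ContDiff ℝ 2 u ∧ (∀ x, 0 ≤ u x) ∧
      (∀ x, laplacian u x = φ x (u x)) ∧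
      Tendsto u (Bornology.cobounded (EuclideanSpace ℝ (Fin d))) atTop :=
  stmt_15_general d φ hφ_nonneg hφ_mono hφ_conc hbounded
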